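/- arXiv:0710.2012 — 3 statements merged into one kernel-verified Lean document; each statement's English description precedes it below -/
import Mathlib

section
/- If smooth functions P and Q of one variable satisfy P''(p)(p+q)² − 4P'(p)(p+q) + 6P(p) = 2Q'(q)(p+q) − 6Q(q) and, symmetrically, Q''(q)(p+q)² − 4Q'(q)(p+q) + 6Q(q) = 2P'(p)(p+q) − 6P(p) for all p, q in open intervals, then P and Q are polynomials of degree at most 3, with P(p) = ap³+bp²+cp+d and Q(q) = aq³−bq²+cq−d for constants a,b,c,d. -/
lemma aux_const (f G g : ℝ → ℝ) (hf : Differentiable ℝ f)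
    (hG : ∀ x, HasDerivAt G (g x) x)
    (S : Set ℝ) (hc : Convex ℝ S) (h : ∀ x ∈ S, deriv f x = g x) :
    ∀ x ∈ S, ∀ y ∈ S, f x - G x = f y - G y := by
  intro x hx y hy
  have hd : ∀ z ∈ S, DifferentiableAt ℝ (fun t => f t - G t) z :=
    fun z _ => (hf z).sub (hG z).differentiableAt
  have hder : ∀ z ∈ S, ‖deriv (fun t => f t - G t) z‖ ≤ 0 := by
    intro z hz
    rw [deriv_fun_sub (hf z) (hG z).differentiableAt, (hG z).deriv, h z hz]
    simp
  have := Convex.norm_image_sub_le_of_norm_deriv_le hd hder hc hx hy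
  simp at this
  linarith [abs_nonneg ((f y - G y) - (f x - G x)), this]

lemma integ_quad (f : ℝ → ℝ) (hf : Differentiable ℝ f) (S : Set ℝ) (hc : Convex ℝ S)
    (hne : S.Nonempty) (a b c : ℝ) (h : ∀ x ∈ S, deriv f x = a*x^2 + b*x + c) :
    ∃ d, ∀ x ∈ S, f x = a*x^3/3 + b*x^2/2 + c*x + d := by
  obtain ⟨x₀, hx₀⟩ := hne
  have hG : ∀ x : ℝ, HasDerivAt (fun t => a*t^3/3 + b*t^2/2 + c*t) (a*x^2 + b*x + c) x := by
    intro x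
    have h1 : HasDerivAt (fun t : ℝ => a*t^3/3 + b*t^2/2 + c*t)
        (a*((3:ℕ)*x^2)/3 + b*((2:ℕ)*x^1)/2 + c*1) x :=
      ((((hasDerivAt_pow 3 x).const_mul a).div_const 3).add
        (((hasDerivAt_pow 2 x).const_mul b).div_const 2)).add ((hasDerivAt_id' (x := x)).const_mul c)
    convert h1 using 1
    push_cast; ring
  refine ⟨f x₀ - (a*x₀^3/3 + b*x₀^2/2 + c*x₀), fun x hx => ?_⟩
  have := aux_const f _ _ hf hG S hc h x hx x₀ hx₀
  linarith

lemma two_pts {S : Set ℝ} (hS : IsOpen S) (hne : S.Nonempty) :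
    ∃ x ∈ S, ∃ y ∈ S, x ≠ y := by
  obtain ⟨x, hx⟩ := hne
  obtain ⟨ε, hε, hball⟩ := Metric.isOpen_iff.mp hS x hx
  refine ⟨x, hx, x + ε/2, hball ?_, by intro h; nlinarith [congrArg (· - x) h]⟩
  rw [Metric.mem_ball, Real.dist_eq]
  rw [show x + ε/2 - x = ε/2 by ring, abs_of_pos (by linarith)]
  linarith

theorem stmt7 (P Q : ℝ → ℝ) (hP : ContDiff ℝ (⊤ : ℕ∞) P) (hQ : ContDiff ℝ (⊤ : ℕ∞) Q)
    (I J : Set ℝ) (hI : IsOpen I) (hJ : IsOpen J)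
    (hIc : I.OrdConnected) (hJc : J.OrdConnected)
    (hIne : I.Nonempty) (hJne : J.Nonempty)
    (h1 : ∀ p ∈ I, ∀ q ∈ J,
      deriv (deriv P) p * (p + q) ^ 2 - 4 * deriv P p * (p + q) + 6 * P p =
        2 * deriv Q q * (p + q) - 6 * Q q)
    (h2 : ∀ p ∈ I, ∀ q ∈ J,
      deriv (deriv Q) q * (p + q) ^ 2 - 4 * deriv Q q * (p + q) + 6 * Q q =
        2 * deriv P p * (p + q) - 6 * P p) :
    ∃ a b c d : ℝ, (∀ p ∈ I, P p = a * p ^ 3 + b * p ^ 2 + c * p + d) ∧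
      (∀ q ∈ J, Q q = a * q ^ 3 - b * q ^ 2 + c * q - d) := by
  have hIconv : Convex ℝ I := convex_iff_ordConnected.mpr hIc
  have hJconv : Convex ℝ J := convex_iff_ordConnected.mpr hJc
  have hP0 : ContDiff ℝ (↑(⊤:ℕ∞)) P := hP.of_le (by simp)
  have hQ0 : ContDiff ℝ (↑(⊤:ℕ∞)) Q := hQ.of_le (by simp)
  have hP1 : ContDiff ℝ (↑(⊤:ℕ∞)) (deriv P) := (contDiff_infty_iff_deriv.mp hP0).2
  have hQ1 : ContDiff ℝ (↑(⊤:ℕ∞)) (deriv Q) := (contDiff_infty_iff_deriv.mp hQ0).2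
  have hP2 : ContDiff ℝ (↑(⊤:ℕ∞)) (deriv (deriv P)) := (contDiff_infty_iff_deriv.mp hP1).2
  have hQ2 : ContDiff ℝ (↑(⊤:ℕ∞)) (deriv (deriv Q)) := (contDiff_infty_iff_deriv.mp hQ1).2
  -- key relation
  have key : ∀ p ∈ I, ∀ q ∈ J,
      (deriv (deriv P) p - deriv (deriv Q) q) * (p + q) = 2 * (deriv P p - deriv Q q) := by
    intro p hp q hq
    have R0 : ∀ y ∈ J,
        ((deriv (deriv P) p - deriv (deriv Q) y) * (p + y) - 2 * (deriv P p - deriv Q y))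
          * (p + y) = 0 := by
      intro y hy
      linear_combination (h1 p hp y hy) - (h2 p hp y hy)
    rcases eq_or_ne (p + q) 0 with h0 | hne
    · set g : ℝ → ℝ := fun y =>
        (deriv (deriv P) p - deriv (deriv Q) y) * (p + y) - 2 * (deriv P p - deriv Q y) with hgdef
      have hgc : Continuous g :=
        ((continuous_const.sub hQ2.continuous).mul (continuous_const.add continuous_id)).sub
          (continuous_const.mul (continuous_const.sub hQ1.continuous))
      have hzero : ∀ᶠ y in nhdsWithin q {q}ᶜ, g y = 0 := by
        have hJmem : J ∈ nhds q := hJ.mem_nhds hq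
        filter_upwards [nhdsWithin_le_nhds hJmem, self_mem_nhdsWithin] with y hyJ hyne
        have hpy : p + y ≠ 0 := by
          intro h
          exact hyne (by simp only [Set.mem_singleton_iff]; linarith)
        rcases mul_eq_zero.mp (R0 y hyJ) with h | h
        · exact h
        · exact absurd h hpy
      have h1t : Filter.Tendsto g (nhdsWithin q {q}ᶜ) (nhds (g q)) :=
        (hgc.tendsto q).mono_left nhdsWithin_le_nhds
      have h2t : Filter.Tendsto g (nhdsWithin q {q}ᶜ) (nhds 0) :=
        (Filter.tendsto_congr' hzero).mpr tendsto_const_nhds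
      have hgq : g q = 0 := tendsto_nhds_unique h1t h2t
      simp only [hgdef] at hgq
      linear_combination hgq
    · rcases mul_eq_zero.mp (R0 q hq) with h | h
      · linear_combination h
      · exact absurd h hne
  obtain ⟨p₁, hp₁, p₂, hp₂, hp12⟩ := two_pts hI hIne
  obtain ⟨q₁, hq₁, q₂, hq₂, hq12⟩ := two_pts hJ hJne
  have hpne : p₁ - p₂ ≠ 0 := sub_ne_zero.mpr hp12
  have hqne : q₁ - q₂ ≠ 0 := sub_ne_zero.mpr hq12
  -- Q'' is affine
  obtain ⟨A, B, hQ2aff⟩ : ∃ A B : ℝ, ∀ q ∈ J, deriv (deriv Q) q = A * q + B := by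
    refine ⟨(deriv (deriv P) p₁ - deriv (deriv P) p₂)/(p₁ - p₂),
      (deriv (deriv P) p₁ * p₁ - deriv (deriv P) p₂ * p₂ - 2 * deriv P p₁ + 2 * deriv P p₂)/(p₁ - p₂), ?_⟩
    intro q hq
    have e1 := key p₁ hp₁ q hq
    have e2 := key p₂ hp₂ q hq
    field_simp
    linear_combination e2 - e1
  -- P'' is affine
  obtain ⟨A', B', hP2aff⟩ : ∃ A B : ℝ, ∀ p ∈ I, deriv (deriv P) p = A * p + B := by
    refine ⟨(deriv (deriv Q) q₁ - deriv (deriv Q) q₂)/(q₁ - q₂),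
      (deriv (deriv Q) q₁ * q₁ - deriv (deriv Q) q₂ * q₂ - 2 * deriv Q q₁ + 2 * deriv Q q₂)/(q₁ - q₂), ?_⟩
    intro p hp
    have e1 := key p hp q₁ hq₁
    have e2 := key p hp q₂ hq₂
    field_simp
    linear_combination e1 - e2
  -- integrate Q
  obtain ⟨C, hQ1poly⟩ : ∃ C, ∀ q ∈ J, deriv Q q = A/2*q^2 + B*q + C := by
    obtain ⟨C, hC⟩ := integ_quad (deriv Q) (hQ1.differentiable (by simp)) J hJconv hJne 0 A B
      (fun x hx => by rw [hQ2aff x hx]; ring)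
    exact ⟨C, fun x hx => by rw [hC x hx]; ring⟩
  obtain ⟨D, hQpoly⟩ : ∃ D, ∀ q ∈ J, Q q = A/6*q^3 + B/2*q^2 + C*q + D := by
    obtain ⟨D, hD⟩ := integ_quad Q (hQ0.differentiable (by simp)) J hJconv hJne (A/2) B C
      (fun x hx => by rw [hQ1poly x hx])
    exact ⟨D, fun x hx => by rw [hD x hx]; ring⟩
  -- integrate P
  obtain ⟨C', hP1poly⟩ : ∃ C, ∀ p ∈ I, deriv P p = A'/2*p^2 + B'*p + C := by
    obtain ⟨C, hC⟩ := integ_quad (deriv P) (hP1.differentiable (by simp)) I hIconv hIne 0 A' B'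
      (fun x hx => by rw [hP2aff x hx]; ring)
    exact ⟨C, fun x hx => by rw [hC x hx]; ring⟩
  obtain ⟨D', hPpoly⟩ : ∃ D, ∀ p ∈ I, P p = A'/6*p^3 + B'/2*p^2 + C'*p + D := by
    obtain ⟨D, hD⟩ := integ_quad P (hP0.differentiable (by simp)) I hIconv hIne (A'/2) B' C'
      (fun x hx => by rw [hP1poly x hx])
    exact ⟨D, fun x hx => by rw [hD x hx]; ring⟩
  -- coefficient matching from key
  have hE : ∀ p ∈ I, ∀ q ∈ J,
      (A' - A)*p*q + (B' + B)*(q - p) + 2*(C - C') = 0 := by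
    intro p hp q hq
    have k := key p hp q hq
    rw [hP2aff p hp, hP1poly p hp, hQ2aff q hq, hQ1poly q hq] at k
    linear_combination k
  have e11 := hE p₁ hp₁ q₁ hq₁
  have e12 := hE p₁ hp₁ q₂ hq₂
  have e21 := hE p₂ hp₂ q₁ hq₁
  have e22 := hE p₂ hp₂ q₂ hq₂
  have hA0 : A' - A = 0 := by
    have h := mul_eq_zero.mp (show (A' - A) * ((p₁ - p₂)*(q₁ - q₂)) = 0 by
      linear_combination e11 - e21 - e12 + e22)
    rcases h with h | h
    · exact h
    · exact absurd h (mul_ne_zero hpne hqne)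
  have hB0 : B' + B = 0 := by
    have h := mul_eq_zero.mp (show (B' + B) * (q₁ - q₂) = 0 by
      linear_combination e11 - e12 - (p₁*(q₁ - q₂))*hA0)
    rcases h with h | h
    · exact h
    · exact absurd h hqne
  have hC0 : C - C' = 0 := by
    linear_combination e11/2 - (p₁*q₁/2)*hA0 - ((q₁ - p₁)/2)*hB0
  have hA' : A' = A := by linarith
  have hB' : B' = -B := by linarith
  have hC' : C' = C := by linarith
  -- constant term relation from h1 at a point
  have hD0 : D + D' = 0 := by
    have e := h1 p₁ hp₁ q₁ hq₁
    rw [hP2aff p₁ hp₁, hP1poly p₁ hp₁, hPpoly p₁ hp₁, hQ1poly q₁ hq₁, hQpoly q₁ hq₁,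
      hA', hB', hC'] at e
    linear_combination e/6
  refine ⟨A/6, -B/2, C, D', ?_, ?_⟩
  · intro p hp
    rw [hPpoly p hp, hA', hB', hC']
    try ring
  · intro q hq
    rw [hQpoly q hq]
    have : D = -D' := by linarith
    rw [this]
    try ring
end

section
/- The quartic potential H(u₁,u₂,u₃) = (λ¹−λ²)u₁²u₂² + (λ²−λ³)u₂²u₃² + (λ³−λ¹)u₃²u₁² satisfies the diagonalizability conditions: J = 0, H₁₂₃ = 0, ∂₁((λ³−λ²)H₁₁ + R₂ + R₃) = 0, ∂₂((λ¹−λ³)H₂₂ + R₁ + R₃) = 0, ∂₃((λ²−λ¹)H₃₃ + R₁ + R₂) = 0, on the open set where u₁u₂u₃ ≠ 0 and all mixed partials H₁₂, H₁₃, H₂₃ are nonzero. -/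
noncomputable def d1 (H : ℝ → ℝ → ℝ → ℝ) : ℝ → ℝ → ℝ → ℝ :=
  fun x y z => deriv (fun t => H t y z) x
noncomputable def d2 (H : ℝ → ℝ → ℝ → ℝ) : ℝ → ℝ → ℝ → ℝ :=
  fun x y z => deriv (fun t => H x t z) y
noncomputable def d3 (H : ℝ → ℝ → ℝ → ℝ) : ℝ → ℝ → ℝ → ℝ :=
  fun x y z => deriv (fun t => H x y t) z

/-- The quartic potential (5.12). -/
noncomputable def Hq (l1 l2 l3 : ℝ) : ℝ → ℝ → ℝ → ℝ :=
  fun u1 u2 u3 => (l1 - l2) * u1 ^ 2 * u2 ^ 2 + (l2 - l3) * u2 ^ 2 * u3 ^ 2 +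
    (l3 - l1) * u3 ^ 2 * u1 ^ 2

/-!
Every second partial derivative of the quartic potential is a monomial, `H₁₂ = 4(λ¹−λ²)u₁u₂`,
`H₁₃ = 4(λ³−λ¹)u₁u₃`, `H₂₃ = 4(λ²−λ³)u₂u₃`, and `H₁₁`, `H₂₂`, `H₃₃` do not depend on their own
variable. Hence `J = 0` and `H₁₂₃ = 0` are polynomial identities, and in each ratio `Hᵢⱼ Hᵢₖ / Hⱼₖ`
the variables `uⱼ`, `uₖ` cancel, so it depends on `uᵢ` alone. Each of the last three expressions is
therefore locally constant in the variable being differentiated, as long as `u₁u₂u₃ ≠ 0`.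
-/

theorem deriv_eq_zero_of_forall_ne {𝕜 F : Type*} [NontriviallyNormedField 𝕜]
    [NormedAddCommGroup F] [NormedSpace 𝕜 F] {f : 𝕜 → F} {a b : 𝕜} (hab : a ≠ b)
    (hf : ∀ x ≠ b, f x = f a) : deriv f a = 0 := by
  have hloc : f =ᶠ[nhds a] fun _ => f a := by
    filter_upwards [eventually_ne_nhds hab] with x hx
    exact hf x hx
  rw [hloc.deriv_eq, deriv_const]

section Hq

variable (l1 l2 l3 : ℝ)

theorem d1_d1_Hq :
    d1 (d1 (Hq l1 l2 l3)) = fun _ y z => 2 * (l1 - l2) * y ^ 2 + 2 * (l3 - l1) * z ^ 2 := by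
  funext x y z
  simp (disch := fun_prop) [d1, Hq]
  ring

theorem d2_d2_Hq :
    d2 (d2 (Hq l1 l2 l3)) = fun x _ z => 2 * (l1 - l2) * x ^ 2 + 2 * (l2 - l3) * z ^ 2 := by
  funext x y z
  simp (disch := fun_prop) [d2, Hq]
  ring

theorem d3_d3_Hq :
    d3 (d3 (Hq l1 l2 l3)) = fun x y _ => 2 * (l2 - l3) * y ^ 2 + 2 * (l3 - l1) * x ^ 2 := by
  funext x y z
  simp (disch := fun_prop) [d3, Hq]
  ring

theorem d2_d1_Hq : d2 (d1 (Hq l1 l2 l3)) = fun x y _ => 4 * (l1 - l2) * x * y := by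
  funext x y z
  simp (disch := fun_prop) [d1, d2, Hq]
  ring

theorem d3_d1_Hq : d3 (d1 (Hq l1 l2 l3)) = fun x _ z => 4 * (l3 - l1) * x * z := by
  funext x y z
  simp (disch := fun_prop) [d1, d3, Hq]
  ring

theorem d3_d2_Hq : d3 (d2 (Hq l1 l2 l3)) = fun _ y z => 4 * (l2 - l3) * y * z := by
  funext x y z
  simp (disch := fun_prop) [d2, d3, Hq]
  ring

theorem d3_d2_d1_Hq : d3 (d2 (d1 (Hq l1 l2 l3))) = fun _ _ _ => 0 := by
  funext x y z
  simp (disch := fun_prop) [d1, d2, d3, Hq]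

variable {l1 l2 l3} {x y z : ℝ}

theorem d2_d1_Hq_mul_d3_d1_Hq_div_d3_d2_Hq (hy : y ≠ 0) (hz : z ≠ 0) :
    d2 (d1 (Hq l1 l2 l3)) x y z * d3 (d1 (Hq l1 l2 l3)) x y z / d3 (d2 (Hq l1 l2 l3)) x y z =
      4 * (l1 - l2) * (l3 - l1) * x ^ 2 / (l2 - l3) := by
  calc _ = 4 * (l1 - l2) * (l3 - l1) * x ^ 2 * (4 * y * z) / ((l2 - l3) * (4 * y * z)) := by
        rw [d2_d1_Hq, d3_d1_Hq, d3_d2_Hq]; ring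
    _ = _ := mul_div_mul_right _ _ (by positivity)

theorem d2_d1_Hq_mul_d3_d2_Hq_div_d3_d1_Hq (hx : x ≠ 0) (hz : z ≠ 0) :
    d2 (d1 (Hq l1 l2 l3)) x y z * d3 (d2 (Hq l1 l2 l3)) x y z / d3 (d1 (Hq l1 l2 l3)) x y z =
      4 * (l1 - l2) * (l2 - l3) * y ^ 2 / (l3 - l1) := by
  calc _ = 4 * (l1 - l2) * (l2 - l3) * y ^ 2 * (4 * x * z) / ((l3 - l1) * (4 * x * z)) := by
        rw [d2_d1_Hq, d3_d1_Hq, d3_d2_Hq]; ring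
    _ = _ := mul_div_mul_right _ _ (by positivity)

theorem d3_d1_Hq_mul_d3_d2_Hq_div_d2_d1_Hq (hx : x ≠ 0) (hy : y ≠ 0) :
    d3 (d1 (Hq l1 l2 l3)) x y z * d3 (d2 (Hq l1 l2 l3)) x y z / d2 (d1 (Hq l1 l2 l3)) x y z =
      4 * (l3 - l1) * (l2 - l3) * z ^ 2 / (l1 - l2) := by
  calc _ = 4 * (l3 - l1) * (l2 - l3) * z ^ 2 * (4 * x * y) / ((l1 - l2) * (4 * x * y)) := by
        rw [d2_d1_Hq, d3_d1_Hq, d3_d2_Hq]; ring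
    _ = _ := mul_div_mul_right _ _ (by positivity)

end Hq

theorem stmt15_general (l1 l2 l3 : ℝ)
    (u1 u2 u3 : ℝ) (hu : u1 * u2 * u3 ≠ 0) :
    let H := Hq l1 l2 l3
    -- J = 0
    ((l2 - l3) * (d2 (d1 H) u1 u2 u3) ^ 2 * (d3 (d1 H) u1 u2 u3) ^ 2 +
      (l3 - l1) * (d3 (d2 H) u1 u2 u3) ^ 2 * (d2 (d1 H) u1 u2 u3) ^ 2 +
      (l1 - l2) * (d3 (d1 H) u1 u2 u3) ^ 2 * (d3 (d2 H) u1 u2 u3) ^ 2 -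
      d2 (d1 H) u1 u2 u3 * d3 (d2 H) u1 u2 u3 * d3 (d1 H) u1 u2 u3 *
        ((l2 - l3) * d1 (d1 H) u1 u2 u3 + (l3 - l1) * d2 (d2 H) u1 u2 u3 +
          (l1 - l2) * d3 (d3 H) u1 u2 u3) = 0) ∧
    -- H₁₂₃ = 0
    d3 (d2 (d1 H)) u1 u2 u3 = 0 ∧
    -- ∂₁((λ³−λ²)H₁₁ + R₂ + R₃) = 0
    deriv (fun x => (l3 - l2) * d1 (d1 H) x u2 u3 +
      (d2 (d1 H) x u2 u3 * d3 (d2 H) x u2 u3 / d3 (d1 H) x u2 u3) * (l3 - l1) +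
      (d3 (d1 H) x u2 u3 * d3 (d2 H) x u2 u3 / d2 (d1 H) x u2 u3) * (l1 - l2)) u1 = 0 ∧
    -- ∂₂((λ¹−λ³)H₂₂ + R₁ + R₃) = 0
    deriv (fun y => (l1 - l3) * d2 (d2 H) u1 y u3 +
      (d2 (d1 H) u1 y u3 * d3 (d1 H) u1 y u3 / d3 (d2 H) u1 y u3) * (l2 - l3) +
      (d3 (d1 H) u1 y u3 * d3 (d2 H) u1 y u3 / d2 (d1 H) u1 y u3) * (l1 - l2)) u2 = 0 ∧
    -- ∂₃((λ²−λ¹)H₃₃ + R₁ + R₂) = 0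
    deriv (fun z => (l2 - l1) * d3 (d3 H) u1 u2 z +
      (d2 (d1 H) u1 u2 z * d3 (d1 H) u1 u2 z / d3 (d2 H) u1 u2 z) * (l2 - l3) +
      (d2 (d1 H) u1 u2 z * d3 (d2 H) u1 u2 z / d3 (d1 H) u1 u2 z) * (l3 - l1)) u3 = 0 := by
  dsimp only
  obtain ⟨⟨hu1, hu2⟩, hu3⟩ : (u1 ≠ 0 ∧ u2 ≠ 0) ∧ u3 ≠ 0 := by simpa [not_or] using hu
  refine ⟨?_, by rw [d3_d2_d1_Hq], ?_, ?_, ?_⟩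
  · simp only [d1_d1_Hq, d2_d2_Hq, d3_d3_Hq, d2_d1_Hq, d3_d1_Hq, d3_d2_Hq]
    ring
  · refine deriv_eq_zero_of_forall_ne hu1 fun x hx => ?_
    simp only [d1_d1_Hq, d2_d1_Hq_mul_d3_d2_Hq_div_d3_d1_Hq hx hu3,
      d2_d1_Hq_mul_d3_d2_Hq_div_d3_d1_Hq hu1 hu3, d3_d1_Hq_mul_d3_d2_Hq_div_d2_d1_Hq hx hu2,
      d3_d1_Hq_mul_d3_d2_Hq_div_d2_d1_Hq hu1 hu2]
  · refine deriv_eq_zero_of_forall_ne hu2 fun y hy => ?_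
    simp only [d2_d2_Hq, d2_d1_Hq_mul_d3_d1_Hq_div_d3_d2_Hq hy hu3,
      d2_d1_Hq_mul_d3_d1_Hq_div_d3_d2_Hq hu2 hu3, d3_d1_Hq_mul_d3_d2_Hq_div_d2_d1_Hq hu1 hy,
      d3_d1_Hq_mul_d3_d2_Hq_div_d2_d1_Hq hu1 hu2]
  · refine deriv_eq_zero_of_forall_ne hu3 fun z hz => ?_
    simp only [d3_d3_Hq, d2_d1_Hq_mul_d3_d1_Hq_div_d3_d2_Hq hu2 hz,
      d2_d1_Hq_mul_d3_d1_Hq_div_d3_d2_Hq hu2 hu3, d2_d1_Hq_mul_d3_d2_Hq_div_d3_d1_Hq hu1 hz,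
      d2_d1_Hq_mul_d3_d2_Hq_div_d3_d1_Hq hu1 hu3]

theorem stmt15 (l1 l2 l3 : ℝ) (hl12 : l1 ≠ l2) (hl13 : l1 ≠ l3) (hl23 : l2 ≠ l3)
    (u1 u2 u3 : ℝ) (hu : u1 * u2 * u3 ≠ 0)
    (h12 : d2 (d1 (Hq l1 l2 l3)) u1 u2 u3 ≠ 0)
    (h13 : d3 (d1 (Hq l1 l2 l3)) u1 u2 u3 ≠ 0)
    (h23 : d3 (d2 (Hq l1 l2 l3)) u1 u2 u3 ≠ 0) :
    let H := Hq l1 l2 l3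
    -- J = 0
    ((l2 - l3) * (d2 (d1 H) u1 u2 u3) ^ 2 * (d3 (d1 H) u1 u2 u3) ^ 2 +
      (l3 - l1) * (d3 (d2 H) u1 u2 u3) ^ 2 * (d2 (d1 H) u1 u2 u3) ^ 2 +
      (l1 - l2) * (d3 (d1 H) u1 u2 u3) ^ 2 * (d3 (d2 H) u1 u2 u3) ^ 2 -
      d2 (d1 H) u1 u2 u3 * d3 (d2 H) u1 u2 u3 * d3 (d1 H) u1 u2 u3 *
        ((l2 - l3) * d1 (d1 H) u1 u2 u3 + (l3 - l1) * d2 (d2 H) u1 u2 u3 +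
          (l1 - l2) * d3 (d3 H) u1 u2 u3) = 0) ∧
    -- H₁₂₃ = 0
    d3 (d2 (d1 H)) u1 u2 u3 = 0 ∧
    -- ∂₁((λ³−λ²)H₁₁ + R₂ + R₃) = 0
    deriv (fun x => (l3 - l2) * d1 (d1 H) x u2 u3 +
      (d2 (d1 H) x u2 u3 * d3 (d2 H) x u2 u3 / d3 (d1 H) x u2 u3) * (l3 - l1) +
      (d3 (d1 H) x u2 u3 * d3 (d2 H) x u2 u3 / d2 (d1 H) x u2 u3) * (l1 - l2)) u1 = 0 ∧
    -- ∂₂((λ¹−λ³)H₂₂ + R₁ + R₃) = 0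
    deriv (fun y => (l1 - l3) * d2 (d2 H) u1 y u3 +
      (d2 (d1 H) u1 y u3 * d3 (d1 H) u1 y u3 / d3 (d2 H) u1 y u3) * (l2 - l3) +
      (d3 (d1 H) u1 y u3 * d3 (d2 H) u1 y u3 / d2 (d1 H) u1 y u3) * (l1 - l2)) u2 = 0 ∧
    -- ∂₃((λ²−λ¹)H₃₃ + R₁ + R₂) = 0
    deriv (fun z => (l2 - l1) * d3 (d3 H) u1 u2 z +
      (d2 (d1 H) u1 u2 z * d3 (d1 H) u1 u2 z / d3 (d2 H) u1 u2 z) * (l2 - l3) +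
      (d2 (d1 H) u1 u2 z * d3 (d2 H) u1 u2 z / d3 (d1 H) u1 u2 z) * (l3 - l1)) u3 = 0 :=
  stmt15_general l1 l2 l3 u1 u2 u3 hu
end

section
/- Let w₁, w₂, w₃ be smooth real functions of single variables u₁, u₂, u₃ respectively, with (w₂−w₁), (w₃−w₁), (w₃−w₂) nonvanishing on a domain. Then p = w₁'·(w₃−w₂)/((w₂−w₁)(w₃−w₁)), q = w₂'·(w₁−w₃)/((w₂−w₁)(w₂−w₃)), r = w₃'·(w₂−w₁)/((w₃−w₁)(w₃−w₂)) satisfy the system q₁ = −p₂ = pq, r₂ = −q₃ = qr, p₃ = −r₁ = pr. -/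
theorem stmt17 (w1 w2 w3 : ℝ → ℝ)
    (h1 : ContDiff ℝ (⊤ : ℕ∞) w1) (h2 : ContDiff ℝ (⊤ : ℕ∞) w2) (h3 : ContDiff ℝ (⊤ : ℕ∞) w3)
    (U : Set (ℝ × ℝ × ℝ)) (hU : IsOpen U)
    (h21 : ∀ s ∈ U, w2 s.2.1 - w1 s.1 ≠ 0)
    (h31 : ∀ s ∈ U, w3 s.2.2 - w1 s.1 ≠ 0)
    (h32 : ∀ s ∈ U, w3 s.2.2 - w2 s.2.1 ≠ 0) :
    let p : ℝ → ℝ → ℝ → ℝ := fun a b c =>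
      deriv w1 a * (w3 c - w2 b) / ((w2 b - w1 a) * (w3 c - w1 a))
    let q : ℝ → ℝ → ℝ → ℝ := fun a b c =>
      deriv w2 b * (w1 a - w3 c) / ((w2 b - w1 a) * (w2 b - w3 c))
    let r : ℝ → ℝ → ℝ → ℝ := fun a b c =>
      deriv w3 c * (w2 b - w1 a) / ((w3 c - w1 a) * (w3 c - w2 b))
    ∀ s ∈ U,
      d1 q s.1 s.2.1 s.2.2 = p s.1 s.2.1 s.2.2 * q s.1 s.2.1 s.2.2 ∧
      d2 p s.1 s.2.1 s.2.2 = -(p s.1 s.2.1 s.2.2 * q s.1 s.2.1 s.2.2) ∧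
      d2 r s.1 s.2.1 s.2.2 = q s.1 s.2.1 s.2.2 * r s.1 s.2.1 s.2.2 ∧
      d3 q s.1 s.2.1 s.2.2 = -(q s.1 s.2.1 s.2.2 * r s.1 s.2.1 s.2.2) ∧
      d3 p s.1 s.2.1 s.2.2 = p s.1 s.2.1 s.2.2 * r s.1 s.2.1 s.2.2 ∧
      d1 r s.1 s.2.1 s.2.2 = -(p s.1 s.2.1 s.2.2 * r s.1 s.2.1 s.2.2) := by
  intro p q r s hs
  obtain ⟨a, b, c⟩ := s
  have hw1 : HasDerivAt w1 (deriv w1 a) a := (h1.differentiable (by simp) a).hasDerivAt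
  have hw2 : HasDerivAt w2 (deriv w2 b) b := (h2.differentiable (by simp) b).hasDerivAt
  have hw3 : HasDerivAt w3 (deriv w3 c) c := (h3.differentiable (by simp) c).hasDerivAt
  have hBA : w2 b - w1 a ≠ 0 := h21 (a, b, c) hs
  have hCA : w3 c - w1 a ≠ 0 := h31 (a, b, c) hs
  have hCB : w3 c - w2 b ≠ 0 := h32 (a, b, c) hs
  have hBC : w2 b - w3 c ≠ 0 := by intro h; apply hCB; linarith
  have hAC : w1 a - w3 c ≠ 0 := by intro h; apply hCA; linarith
  have hAB : w1 a - w2 b ≠ 0 := by intro h; apply hBA; linarith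
  simp only [p, q, r, d1, d2, d3]
  refine ⟨?_, ?_, ?_, ?_, ?_, ?_⟩
  · have hd : HasDerivAt
        (fun t => deriv w2 b * (w1 t - w3 c) / ((w2 b - w1 t) * (w2 b - w3 c))) _ a :=
      ((hw1.sub_const (w3 c)).const_mul (deriv w2 b)).div
        ((hw1.const_sub (w2 b)).mul_const (w2 b - w3 c)) (mul_ne_zero hBA hBC)
    rw [hd.deriv]; field_simp; ring
  · have hd : HasDerivAt
        (fun t => deriv w1 a * (w3 c - w2 t) / ((w2 t - w1 a) * (w3 c - w1 a))) _ b :=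
      ((hw2.const_sub (w3 c)).const_mul (deriv w1 a)).div
        ((hw2.sub_const (w1 a)).mul_const (w3 c - w1 a)) (mul_ne_zero hBA hCA)
    rw [hd.deriv]; field_simp; ring
  · have hd : HasDerivAt
        (fun t => deriv w3 c * (w2 t - w1 a) / ((w3 c - w1 a) * (w3 c - w2 t))) _ b :=
      ((hw2.sub_const (w1 a)).const_mul (deriv w3 c)).div
        ((hw2.const_sub (w3 c)).const_mul (w3 c - w1 a)) (mul_ne_zero hCA hCB)
    rw [hd.deriv]; field_simp; ring
  · have hd : HasDerivAt
        (fun t => deriv w2 b * (w1 a - w3 t) / ((w2 b - w1 a) * (w2 b - w3 t))) _ c :=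
      ((hw3.const_sub (w1 a)).const_mul (deriv w2 b)).div
        ((hw3.const_sub (w2 b)).const_mul (w2 b - w1 a)) (mul_ne_zero hBA hBC)
    rw [hd.deriv]; field_simp; ring
  · have hd : HasDerivAt
        (fun t => deriv w1 a * (w3 t - w2 b) / ((w2 b - w1 a) * (w3 t - w1 a))) _ c :=
      ((hw3.sub_const (w2 b)).const_mul (deriv w1 a)).div
        ((hw3.sub_const (w1 a)).const_mul (w2 b - w1 a)) (mul_ne_zero hBA hCA)
    rw [hd.deriv]; field_simp; ring
  · have hd : HasDerivAt
        (fun t => deriv w3 c * (w2 b - w1 t) / ((w3 c - w1 t) * (w3 c - w2 b))) _ a :=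
      ((hw1.const_sub (w2 b)).const_mul (deriv w3 c)).div
        ((hw1.const_sub (w3 c)).mul_const (w3 c - w2 b)) (mul_ne_zero hCA hCB)
    rw [hd.deriv]; field_simp; ring
end
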